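/- arXiv:1410.7090 — 2 statements merged into one kernel-verified Lean document; each statement's English description precedes it below -/
import Mathlib

section
/- Let ω : [0,1] → ℝ be continuous with Lebesgue measure of {t ∈ [0,1] : ω(t) = 0} equal to 0, and define φ(f) = ∫₀¹ 1_{[0,∞)}(f(t)) dt for bounded measurable f : [0,1] → ℝ. Then for every ε > 0 there exists ν > 0 such that every bounded measurable ϖ : [0,1] → ℝ with sup_{t ∈ [0,1]} |ϖ(t) - ω(t)| < ν satisfies |φ(ω) - φ(ϖ)| < ε. -/
/-! Since `ω` is continuous, the sets `{t | |ω t| < δ}` are measurable and decrease, as `δ ↓ 0`,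
to the null set `{t | ω t = 0}`, so their measure tends to `0`. If `‖ϖ - ω‖∞ < δ`, then `ω` and
`ϖ` can disagree in sign only where `|ω| < δ`, so `φ ω` and `φ ϖ` differ by at most the measure
of that set. -/

open MeasureTheory Set Filter Topology ENNReal

lemma ENNReal.abs_toReal_sub_le_of_le_add {a b c : ℝ≥0∞} (ha : a ≠ ∞) (hb : b ≠ ∞) (hc : c ≠ ∞)
    (hab : a ≤ b + c) (hba : b ≤ a + c) : |a.toReal - b.toReal| ≤ c.toReal := by
  have hab' := ENNReal.toReal_mono (add_ne_top.2 ⟨hb, hc⟩) hab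
  have hba' := ENNReal.toReal_mono (add_ne_top.2 ⟨ha, hc⟩) hba
  rw [ENNReal.toReal_add hb hc] at hab'
  rw [ENNReal.toReal_add ha hc] at hba'
  exact abs_sub_le_iff.2 ⟨by linarith, by linarith⟩

namespace MeasureTheory

variable {α : Type*} [MeasurableSpace α] {μ : Measure α} {f g : α → ℝ} {δ : ℝ}

lemma tendsto_measure_abs_lt_nhdsGT_zero [IsFiniteMeasure μ] (hf : AEMeasurable f μ) :
    Tendsto (fun δ => μ {x | |f x| < δ}) (𝓝[>] 0) (𝓝 (μ {x | f x = 0})) := by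
  have hinter : ⋂ δ > (0 : ℝ), {x | |f x| < δ} = {x | f x = 0} := by
    ext x
    simp only [mem_iInter, mem_ofPred_eq]
    exact ⟨fun h => abs_nonpos_iff.1 (forall_gt_iff_le.1 h),
      fun h δ hδ => by simpa [h] using hδ⟩
  rw [← hinter]
  exact tendsto_measure_biInter_gt
    (fun δ _ => nullMeasurableSet_lt hf.abs aemeasurable_const)
    (fun _ _ _ hij _ hx => lt_of_lt_of_le hx hij) ⟨1, one_pos, measure_ne_top μ _⟩

lemma measure_nonneg_le_add_of_ae_abs_sub_lt (h : ∀ᵐ x ∂μ, |g x - f x| < δ) :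
    μ {x | 0 ≤ f x} ≤ μ {x | 0 ≤ g x} + μ {x | |f x| < δ} := by
  refine (measure_mono_ae (h.mono fun x hx (hfx : 0 ≤ f x) => ?_)).trans (measure_union_le _ _)
  show 0 ≤ g x ∨ |f x| < δ
  by_contra! hgx
  rw [abs_of_nonneg hfx] at hgx
  linarith [neg_abs_le (g x - f x)]

lemma measure_nonneg_le_add_of_ae_abs_sub_lt' (h : ∀ᵐ x ∂μ, |g x - f x| < δ) :
    μ {x | 0 ≤ g x} ≤ μ {x | 0 ≤ f x} + μ {x | |f x| < δ} := by
  refine (measure_mono_ae (h.mono fun x hx (hgx : 0 ≤ g x) => ?_)).trans (measure_union_le _ _)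
  show 0 ≤ f x ∨ |f x| < δ
  by_contra! hfx
  rw [abs_of_neg hfx.1] at hfx
  linarith [le_abs_self (g x - f x)]

theorem exists_pos_abs_measure_nonneg_sub_lt [IsFiniteMeasure μ] (hf : AEMeasurable f μ)
    (hzero : μ {x | f x = 0} = 0) {ε : ℝ} (hε : 0 < ε) :
    ∃ ν > 0, ∀ g : α → ℝ, (∀ᵐ x ∂μ, |g x - f x| < ν) →
      |(μ {x | 0 ≤ f x}).toReal - (μ {x | 0 ≤ g x}).toReal| < ε := by
  have hsmall : ∀ᶠ δ in 𝓝[>] 0, μ {x | |f x| < δ} < ENNReal.ofReal ε := by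
    refine (tendsto_measure_abs_lt_nhdsGT_zero hf).eventually_lt_const ?_
    rwa [hzero, ENNReal.ofReal_pos]
  obtain ⟨ν, hν, hνpos⟩ := (hsmall.and self_mem_nhdsWithin).exists
  refine ⟨ν, hνpos, fun g hg => ?_⟩
  calc |(μ {x | 0 ≤ f x}).toReal - (μ {x | 0 ≤ g x}).toReal|
      ≤ (μ {x | |f x| < ν}).toReal :=
        ENNReal.abs_toReal_sub_le_of_le_add (measure_ne_top _ _) (measure_ne_top _ _)
          (measure_ne_top _ _) (measure_nonneg_le_add_of_ae_abs_sub_lt hg)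
          (measure_nonneg_le_add_of_ae_abs_sub_lt' hg)
    _ < ε := ENNReal.toReal_lt_of_lt_ofReal hν

end MeasureTheory

theorem stmt_1 (ω : ℝ → ℝ) (hω : ContinuousOn ω (Icc 0 1))
    (hzero : volume {t ∈ Icc (0:ℝ) 1 | ω t = 0} = 0)
    (φ : (ℝ → ℝ) → ℝ)
    (hφ : ∀ f : ℝ → ℝ, φ f = (volume {t ∈ Icc (0:ℝ) 1 | 0 ≤ f t}).toReal) :
    ∀ ε > (0:ℝ), ∃ ν > (0:ℝ), ∀ ϖ : ℝ → ℝ, Measurable ϖ →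
      (∀ t ∈ Icc (0:ℝ) 1, |ϖ t - ω t| < ν) → |φ ω - φ ϖ| < ε := by
  have hrestrict : ∀ p : ℝ → Prop,
      volume.restrict (Icc (0:ℝ) 1) {t | p t} = volume {t ∈ Icc (0:ℝ) 1 | p t} := fun p => by
    rw [Measure.restrict_apply' measurableSet_Icc, inter_comm]
    rfl
  intro ε hε
  obtain ⟨ν, hν, hclose⟩ := exists_pos_abs_measure_nonneg_sub_lt
    (hω.aemeasurable measurableSet_Icc) (by rwa [hrestrict]) hε
  refine ⟨ν, hν, fun ϖ _ hϖ => ?_⟩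
  simpa only [hφ, hrestrict] using hclose ϖ (ae_restrict_of_forall_mem measurableSet_Icc hϖ)
end

section
/- Let g : ℕ → [0, ∞) be nonincreasing and α > 1. Then limsup_{n → ∞} (ln n)·g(n) ≤ α · limsup_{m → ∞} (ln(m+1))·g(⌈m^α⌉). -/
/-!
Put `m = ⌊n ^ (1/α)⌋₊`, so that `m ^ α ≤ n < (m + 1) ^ α`. Then `g n ≤ g ⌈m ^ α⌉₊` because `g` is
nonincreasing, and `log n ≤ α log (m + 1)`, so every eventual upper bound `c` of the subsequence
`log (m + 1) g ⌈m ^ α⌉₊` yields the eventual upper bound `α c` of `log n g n`.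
If instead the subsequence is unbounded above, then so is `log n g n`, because
`log (m + 1) ≤ 2 log ⌈m ^ α⌉₊` for `m ≥ 2`, and both limsups take the junk value `sInf ∅ = 0` of `ℝ`.
-/

open Filter Real

lemma Real.limsup_le_mul_limsup {ι κ : Type*} {l : Filter ι} {l' : Filter κ} {u : ι → ℝ}
    {v : κ → ℝ} {α : ℝ} (hα : 0 < α) (hu : IsCoboundedUnder (· ≤ ·) l u)
    (hv : IsBoundedUnder (· ≤ ·) l' v)
    (huv : ∀ c, (∀ᶠ m in l', v m ≤ c) → ∀ᶠ n in l, u n ≤ α * c) :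
    limsup u l ≤ α * limsup v l' := by
  refine le_of_forall_gt_imp_ge_of_dense fun c hc => ?_
  have hvc : limsup v l' < c / α := by rwa [lt_div_iff₀' hα]
  calc limsup u l ≤ α * (c / α) :=
        limsup_le_of_le hu (huv _ ((eventually_lt_of_limsup_lt hvc hv).mono fun _ => le_of_lt))
    _ = c := mul_div_cancel₀ _ hα.ne'

lemma Nat.floor_rpow_inv_rpow_le {x α : ℝ} (hx : 0 ≤ x) (hα : 0 < α) :
    (⌊x ^ α⁻¹⌋₊ : ℝ) ^ α ≤ x :=
  calc (⌊x ^ α⁻¹⌋₊ : ℝ) ^ α ≤ (x ^ α⁻¹) ^ α :=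
        rpow_le_rpow (Nat.cast_nonneg _) (Nat.floor_le (by positivity)) hα.le
    _ = x := rpow_inv_rpow hx hα.ne'

lemma Nat.lt_floor_rpow_inv_add_one_rpow {x α : ℝ} (hx : 0 ≤ x) (hα : 0 < α) :
    x < ((⌊x ^ α⁻¹⌋₊ : ℝ) + 1) ^ α :=
  calc x = (x ^ α⁻¹) ^ α := (rpow_inv_rpow hx hα.ne').symm
    _ < ((⌊x ^ α⁻¹⌋₊ : ℝ) + 1) ^ α := rpow_lt_rpow (by positivity) (Nat.lt_floor_add_one _) hα

section

variable {g : ℕ → ℝ} {α : ℝ}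

lemma log_mul_le_of_rpow_le_of_lt_rpow (hg0 : ∀ n, 0 ≤ g n) (hmono : Antitone g) (hα : 0 < α)
    {n m : ℕ} (hn : 0 < n) (hmn : (m : ℝ) ^ α ≤ n) (hnm : (n : ℝ) < ((m : ℝ) + 1) ^ α) :
    log n * g n ≤ α * (log (m + 1) * g ⌈(m : ℝ) ^ α⌉₊) := by
  have hlog : log n ≤ α * log (m + 1) :=
    calc log n ≤ log (((m : ℝ) + 1) ^ α) := log_le_log (by exact_mod_cast hn) hnm.le
      _ = α * log (m + 1) := log_rpow (by positivity) α
  have hg : g n ≤ g ⌈(m : ℝ) ^ α⌉₊ := hmono (Nat.ceil_le.mpr hmn)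
  have hlog_nonneg : 0 ≤ log ((m : ℝ) + 1) := log_nonneg (by simp)
  calc log n * g n ≤ (α * log (m + 1)) * g ⌈(m : ℝ) ^ α⌉₊ :=
        mul_le_mul hlog hg (hg0 n) (by positivity)
    _ = α * (log (m + 1) * g ⌈(m : ℝ) ^ α⌉₊) := mul_assoc _ _ _

lemma eventually_log_mul_le_of_eventually_le (hg0 : ∀ n, 0 ≤ g n) (hmono : Antitone g)
    (hα : 0 < α) {c : ℝ} (hc : ∀ᶠ m : ℕ in atTop, log (m + 1) * g ⌈(m : ℝ) ^ α⌉₊ ≤ c) :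
    ∀ᶠ n : ℕ in atTop, log n * g n ≤ α * c := by
  have hfloor : Tendsto (fun n : ℕ => ⌊(n : ℝ) ^ α⁻¹⌋₊) atTop atTop :=
    tendsto_nat_floor_atTop.comp
      ((tendsto_rpow_atTop (inv_pos.mpr hα)).comp tendsto_natCast_atTop_atTop)
  filter_upwards [hfloor.eventually hc, eventually_gt_atTop 0] with n hcn hn
  calc log n * g n ≤ α * (log (⌊(n : ℝ) ^ α⁻¹⌋₊ + 1) * g ⌈(⌊(n : ℝ) ^ α⁻¹⌋₊ : ℝ) ^ α⌉₊) :=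
        log_mul_le_of_rpow_le_of_lt_rpow hg0 hmono hα hn
          (Nat.floor_rpow_inv_rpow_le n.cast_nonneg hα)
          (Nat.lt_floor_rpow_inv_add_one_rpow n.cast_nonneg hα)
    _ ≤ α * c := mul_le_mul_of_nonneg_left hcn hα.le

lemma log_succ_mul_le_two_mul_log_ceil_rpow (hg0 : ∀ n, 0 ≤ g n) (hα : 1 ≤ α) {m : ℕ}
    (hm : 2 ≤ m) :
    log (m + 1) * g ⌈(m : ℝ) ^ α⌉₊ ≤ 2 * (log ⌈(m : ℝ) ^ α⌉₊ * g ⌈(m : ℝ) ^ α⌉₊) := by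
  have hm2 : (2 : ℝ) ≤ m := by exact_mod_cast hm
  have hm_le : (m : ℝ) ≤ ⌈(m : ℝ) ^ α⌉₊ :=
    (self_le_rpow_of_one_le (by linarith) hα).trans (Nat.le_ceil _)
  have hlog : log (m + 1) ≤ 2 * log ⌈(m : ℝ) ^ α⌉₊ :=
    calc log (m + 1) ≤ log ((m : ℝ) ^ 2) := log_le_log (by positivity) (by nlinarith)
      _ = 2 * log m := by rw [log_pow, Nat.cast_ofNat]
      _ ≤ 2 * log ⌈(m : ℝ) ^ α⌉₊ := by gcongr
  calc log (m + 1) * g ⌈(m : ℝ) ^ α⌉₊ ≤ (2 * log ⌈(m : ℝ) ^ α⌉₊) * g ⌈(m : ℝ) ^ α⌉₊ :=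
        mul_le_mul_of_nonneg_right hlog (hg0 _)
    _ = 2 * (log ⌈(m : ℝ) ^ α⌉₊ * g ⌈(m : ℝ) ^ α⌉₊) := mul_assoc _ _ _

lemma isBoundedUnder_log_succ_mul_of_isBoundedUnder (hg0 : ∀ n, 0 ≤ g n) (hα : 1 ≤ α)
    (hbdd : IsBoundedUnder (· ≤ ·) atTop fun n : ℕ => log n * g n) :
    IsBoundedUnder (· ≤ ·) atTop fun m : ℕ => log (m + 1) * g ⌈(m : ℝ) ^ α⌉₊ := by
  obtain ⟨C, hC⟩ := hbdd
  have hceil : Tendsto (fun m : ℕ => ⌈(m : ℝ) ^ α⌉₊) atTop atTop :=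
    tendsto_nat_ceil_atTop.comp
      ((tendsto_rpow_atTop (by linarith)).comp tendsto_natCast_atTop_atTop)
  refine ⟨2 * C, eventually_map.mpr ?_⟩
  filter_upwards [hceil.eventually (eventually_map.mp hC), eventually_ge_atTop 2] with m hCm hm
  exact (log_succ_mul_le_two_mul_log_ceil_rpow hg0 hα hm).trans (by linarith)

end

theorem stmt_9 (g : ℕ → ℝ) (hg0 : ∀ n, 0 ≤ g n) (hmono : Antitone g)
    (α : ℝ) (hα : 1 < α) :
    limsup (fun n : ℕ => Real.log n * g n) atTop ≤
      α * limsup (fun m : ℕ => Real.log (m + 1) * g ⌈(m : ℝ) ^ α⌉₊) atTop := by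
  have hα0 : 0 < α := one_pos.trans hα
  by_cases hbdd : IsBoundedUnder (· ≤ ·) atTop fun m : ℕ => log (m + 1) * g ⌈(m : ℝ) ^ α⌉₊
  · have hcobdd : IsCoboundedUnder (· ≤ ·) atTop fun n : ℕ => log n * g n :=
      isCoboundedUnder_le_of_eventually_le atTop <| (eventually_ge_atTop 1).mono fun n hn =>
        mul_nonneg (log_nonneg (by exact_mod_cast hn)) (hg0 n)
    exact Real.limsup_le_mul_limsup hα0 hcobdd hbdd fun c hc =>
      eventually_log_mul_le_of_eventually_le hg0 hmono hα0 hc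
  · rw [Real.limsup_of_not_isBoundedUnder hbdd, Real.limsup_of_not_isBoundedUnder
      (mt (isBoundedUnder_log_succ_mul_of_isBoundedUnder hg0 hα.le) hbdd), mul_zero]
end
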